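/- If I = (m, n, s, t) is a minimal normalized scheduling instance with ρ_I > 1, then n ≤ Σ_{i=1}^{n} t(i) ≤ (m − 1)/(ρ_I − 1). -/

import Mathlib

open Finset

/-- A scheduling instance on uniform processors: `m` processors with positive
speeds `s 1, …, s m`, and `n` tasks with positive sizes `t 1 ≥ … ≥ t n`
(tasks are given in non-increasing order of size, as assumed for LPT). -/
structure SchedInstance where
  m : ℕ
  n : ℕ
  s : ℕ → ℝ
  t : ℕ → ℝ
  hm : 1 ≤ m
  hn : 1 ≤ n
  hs : ∀ p, 1 ≤ p → p ≤ m → 0 < s p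
  ht : ∀ i, 1 ≤ i → i ≤ n → 0 < t i
  tsorted : ∀ i j, 1 ≤ i → i ≤ j → j ≤ n → t j ≤ t i

namespace SchedInstance

variable (I : SchedInstance)

/-- The set of processor indices `{1, …, m}`. -/
def procs : Finset ℕ := Finset.Icc 1 I.m

/-- The set of task indices `{1, …, n}`. -/
def tasks : Finset ℕ := Finset.Icc 1 I.n

lemma procs_nonempty : I.procs.Nonempty := Finset.nonempty_Icc.mpr I.hm

/-- A schedule assigns every task `i ∈ {1,…,n}` a processor `A i ∈ {1,…,m}`. -/
def IsSchedule (A : ℕ → ℕ) : Prop := ∀ i ∈ I.tasks, A i ∈ I.procs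

/-- Total size of the tasks assigned by `A` to processor `p`. -/
noncomputable def load (A : ℕ → ℕ) (p : ℕ) : ℝ :=
  ∑ i ∈ I.tasks.filter (fun i => A i = p), I.t i

/-- The makespan of a schedule `A` : the largest completion time
`(Σ_{A i = p} t i) / s p` over the processors `p`. -/
noncomputable def makespan (A : ℕ → ℕ) : ℝ :=
  I.procs.sup' I.procs_nonempty (fun p => I.load A p / I.s p)

/-- `OPT(I)`: the optimal (minimum) makespan over all schedules. -/
noncomputable def opt : ℝ := sInf {r | ∃ A, I.IsSchedule A ∧ I.makespan A = r}

/-- The completion time of processor `p` if task `i` is added to it while the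
current workloads are `w`. -/
noncomputable def cost (w : ℕ → ℝ) (i p : ℕ) : ℝ := (w p + I.t i) / I.s p

/-- The processor the LPT rule chooses for task `i` given current workloads `w` :
the smallest-index processor minimizing `(w p + t i) / s p`. -/
noncomputable def choose (w : ℕ → ℝ) (i : ℕ) : ℕ :=
  (I.procs.filter
    (fun p => I.cost w i p = I.procs.inf' I.procs_nonempty (I.cost w i))).min'
    (by
      obtain ⟨p, hp, hpe⟩ := Finset.exists_mem_eq_inf' I.procs_nonempty (I.cost w i)
      exact ⟨p, Finset.mem_filter.mpr ⟨hp, hpe.symm⟩⟩)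

/-- `lptW k p` : the workload of processor `p` after the LPT algorithm has
assigned tasks `1, …, k` (in this order). -/
noncomputable def lptW : ℕ → ℕ → ℝ
  | 0, _ => 0
  | (k + 1), p =>
      lptW k p + if I.choose (lptW k) (k + 1) = p ∧ k + 1 ≤ I.n then I.t (k + 1) else 0

/-- `A_I` : the LPT assignment; task `i` goes to the least-index processor
minimizing the resulting completion time, given the previous assignments. -/
noncomputable def lptA (i : ℕ) : ℕ := I.choose (I.lptW (i - 1)) i

/-- `LPT(I)` : the makespan of the LPT schedule. -/
noncomputable def lptTime : ℝ := I.makespan I.lptA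

/-- `ρ_I = LPT(I) / OPT(I)` : the approximation ratio of LPT on instance `I`. -/
noncomputable def ratio : ℝ := I.lptTime / I.opt

/-- `I` is normalized: `OPT(I) = 1`, speeds are non-increasing, and the
smallest task has size `t n = 1`. -/
def Normalized : Prop :=
  I.opt = 1 ∧ (∀ p q, 1 ≤ p → p ≤ q → q ≤ I.m → I.s q ≤ I.s p) ∧ I.t I.n = 1

/-- `I` is minimal: every strictly smaller instance has a strictly smaller
LPT approximation ratio. -/
def Minimal : Prop :=
  ∀ J : SchedInstance, J.m ≤ I.m → J.n ≤ I.n →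
    ¬(J.m = I.m ∧ J.n = I.n) → J.ratio < I.ratio

/-- `T_I(p)` : the tasks assigned to processor `p` by the LPT schedule. -/
noncomputable def T (p : ℕ) : Finset ℕ := I.tasks.filter (fun i => I.lptA i = p)

/-- `T'_I(p) = T_I(p) \ {n}` : the LPT tasks of `p`, without the last task. -/
noncomputable def T' (p : ℕ) : Finset ℕ := (I.T p).erase I.n

/-- `w'_I(p)` : the workload of `p` in the LPT schedule without the last task. -/
noncomputable def w' (p : ℕ) : ℝ := ∑ i ∈ I.T' p, I.t i

/-- `T*(p)` for a schedule `A` : the tasks assigned to processor `p` by `A`. -/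
noncomputable def Tstar (A : ℕ → ℕ) (p : ℕ) : Finset ℕ :=
  I.tasks.filter (fun i => A i = p)

/-- `w*(p)` for a schedule `A` : the workload of processor `p` under `A`. -/
noncomputable def wstar (A : ℕ → ℕ) (p : ℕ) : ℝ := ∑ i ∈ I.Tstar A p, I.t i

/-- `A` is an optimal schedule whose workloads satisfy `w*(1) ≥ … ≥ w*(m)`. -/
def IsSortedOptimal (A : ℕ → ℕ) : Prop :=
  I.IsSchedule A ∧ I.makespan A = I.opt ∧
    ∀ p q, 1 ≤ p → p ≤ q → q ≤ I.m → I.wstar A q ≤ I.wstar A p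

/-- Processor `p` dominates processor `q` (with respect to the optimal
schedule `A`): `s p ≤ s q` and there is `f : T*(q) → T'(p)` with
`t i ≥ Σ_{f j = i} t j` for every `i ∈ T'(p)`. -/
def Dominates (A : ℕ → ℕ) (p q : ℕ) : Prop :=
  I.s p ≤ I.s q ∧ ∃ f : ℕ → ℕ,
    (∀ j ∈ I.Tstar A q, f j ∈ I.T' p) ∧
    ∀ i ∈ I.T' p, (∑ j ∈ (I.Tstar A q).filter (fun j => f j = i), I.t j) ≤ I.t i

end SchedInstance

/-- The polynomial `P_m(x) = 2x^m − x^{m−1} − ⋯ − x − 2`. -/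
noncomputable def Pm (m : ℕ) (x : ℝ) : ℝ := 2 * x ^ m - (∑ k ∈ Finset.Ico 1 m, x ^ k) - 2

/-! Every task has size at least `t n = 1`, whence `n ≤ Σ t`. Since `OPT(I) = 1`, the total size
`Σ t` is at most the total speed `Σ s`. Deleting the last task does not increase `OPT` and, unless
that task is the one finishing last in the LPT schedule, does not decrease `LPT` either; so by
minimality `ρ_I = LPT(I)` is the completion time of task `n`. LPT put that task, of size `1`, on the
processor where it finishes earliest, hence `ρ_I s(p) ≤ w'(p) + 1` for every processor `p`, and
summing over `p` gives `ρ_I Σ t ≤ ρ_I Σ s ≤ (Σ t - 1) + m`. -/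

namespace SchedInstance

variable (I : SchedInstance)

lemma one_mem_procs : 1 ∈ I.procs := Finset.mem_Icc.mpr ⟨le_rfl, I.hm⟩

lemma t_pos_of_mem {i : ℕ} (hi : i ∈ I.tasks) : 0 < I.t i := by
  rw [tasks, Finset.mem_Icc] at hi; exact I.ht i hi.1 hi.2

lemma s_pos_of_mem {p : ℕ} (hp : p ∈ I.procs) : 0 < I.s p := by
  rw [procs, Finset.mem_Icc] at hp; exact I.hs p hp.1 hp.2

lemma card_procs : (I.procs.card : ℝ) = I.m := by
  simp [procs]

lemma sum_s_pos : 0 < ∑ p ∈ I.procs, I.s p :=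
  Finset.sum_pos (fun _ hp => I.s_pos_of_mem hp) I.procs_nonempty

lemma sum_t_pos : 0 < ∑ i ∈ I.tasks, I.t i :=
  Finset.sum_pos (fun _ hi => I.t_pos_of_mem hi) (Finset.nonempty_Icc.mpr I.hn)

lemma load_nonneg (A : ℕ → ℕ) (p : ℕ) : 0 ≤ I.load A p :=
  Finset.sum_nonneg fun i hi => (I.t_pos_of_mem (Finset.mem_of_mem_filter i hi)).le

lemma load_le_makespan_mul (A : ℕ → ℕ) {p : ℕ} (hp : p ∈ I.procs) :
    I.load A p ≤ I.makespan A * I.s p :=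
  (div_le_iff₀ (I.s_pos_of_mem hp)).mp <| Finset.le_sup' (fun p => I.load A p / I.s p) hp

lemma makespan_nonneg (A : ℕ → ℕ) : 0 ≤ I.makespan A :=
  (div_nonneg (I.load_nonneg A 1) (I.s_pos_of_mem I.one_mem_procs).le).trans <|
    Finset.le_sup' (fun p => I.load A p / I.s p) I.one_mem_procs

lemma opt_le_makespan {A : ℕ → ℕ} (hA : I.IsSchedule A) : I.opt ≤ I.makespan A :=
  csInf_le ⟨0, by rintro _ ⟨A, -, rfl⟩; exact I.makespan_nonneg A⟩ ⟨A, hA, rfl⟩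

lemma le_opt {r : ℝ} (h : ∀ A, I.IsSchedule A → r ≤ I.makespan A) : r ≤ I.opt :=
  le_csInf ⟨_, fun _ => 1, fun _ _ => I.one_mem_procs, rfl⟩ (by rintro _ ⟨A, hA, rfl⟩; exact h A hA)

lemma sum_t_le_makespan_mul_sum_s {A : ℕ → ℕ} (hA : I.IsSchedule A) :
    ∑ i ∈ I.tasks, I.t i ≤ I.makespan A * ∑ p ∈ I.procs, I.s p := by
  rw [← Finset.sum_fiberwise_of_maps_to hA I.t, Finset.mul_sum]
  exact Finset.sum_le_sum fun p hp => I.load_le_makespan_mul A hp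

lemma sum_t_le_opt_mul_sum_s : ∑ i ∈ I.tasks, I.t i ≤ I.opt * ∑ p ∈ I.procs, I.s p := by
  rw [← div_le_iff₀ I.sum_s_pos]
  exact I.le_opt fun A hA => (div_le_iff₀ I.sum_s_pos).mpr (I.sum_t_le_makespan_mul_sum_s hA)

lemma opt_pos : 0 < I.opt := by
  refine lt_of_mul_lt_mul_right ?_ I.sum_s_pos.le
  rw [zero_mul]
  exact I.sum_t_pos.trans_le I.sum_t_le_opt_mul_sum_s

lemma choose_mem_filter (w : ℕ → ℝ) (i : ℕ) :
    I.choose w i ∈ I.procs.filter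
      (fun p => I.cost w i p = I.procs.inf' I.procs_nonempty (I.cost w i)) :=
  Finset.min'_mem _ _

lemma lptA_mem (i : ℕ) : I.lptA i ∈ I.procs :=
  Finset.mem_of_mem_filter _ (I.choose_mem_filter _ i)

lemma cost_choose_le (w : ℕ → ℝ) (i : ℕ) {p : ℕ} (hp : p ∈ I.procs) :
    I.cost w i (I.choose w i) ≤ I.cost w i p := by
  rw [(Finset.mem_filter.mp (I.choose_mem_filter w i)).2]
  exact Finset.inf'_le _ hp

lemma lptW_succ (k p : ℕ) :
    I.lptW (k + 1) p = I.lptW k p +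
      if I.choose (I.lptW k) (k + 1) = p ∧ k + 1 ≤ I.n then I.t (k + 1) else 0 := rfl

lemma lptW_eq_sum (k p : ℕ) :
    I.lptW k p = ∑ i ∈ Finset.Icc 1 k, if I.lptA i = p ∧ i ≤ I.n then I.t i else 0 := by
  induction k with
  | zero => simp [lptW]
  | succ k ih => rw [Finset.sum_Icc_succ_top (by omega), ← ih, I.lptW_succ]; rfl

lemma load_lptA (p : ℕ) : I.load I.lptA p = I.lptW I.n p := by
  rw [I.lptW_eq_sum, load, Finset.sum_filter]
  refine Finset.sum_congr rfl fun i hi => ?_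
  simp [(Finset.mem_Icc.mp hi).2]

lemma sum_lptW_of_le {k : ℕ} (hk : k ≤ I.n) :
    ∑ p ∈ I.procs, I.lptW k p = ∑ i ∈ Finset.Icc 1 k, I.t i := by
  simp only [lptW_eq_sum]
  rw [Finset.sum_comm]
  refine Finset.sum_congr rfl fun i hi => ?_
  have hin : i ≤ I.n := (Finset.mem_Icc.mp hi).2.trans hk
  simp only [hin, and_true]
  rw [Finset.sum_ite_eq, if_pos (I.lptA_mem i)]

noncomputable def lptMakespan (k : ℕ) : ℝ :=
  I.procs.sup' I.procs_nonempty fun p => I.lptW k p / I.s p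

lemma lptTime_eq_lptMakespan : I.lptTime = I.lptMakespan I.n := by
  simp only [lptTime, makespan, lptMakespan, load_lptA]

lemma lptMakespan_zero : I.lptMakespan 0 = 0 := by
  simp [lptMakespan, lptW]

lemma lptMakespan_succ_le (k : ℕ) :
    I.lptMakespan (k + 1) ≤
      max (I.lptMakespan k) (I.cost (I.lptW k) (k + 1) (I.choose (I.lptW k) (k + 1))) := by
  refine Finset.sup'_le _ _ fun p hp => ?_
  rw [I.lptW_succ]
  split_ifs with h
  · rw [← h.1]
    exact le_max_right _ _
  · rw [add_zero]
    exact (Finset.le_sup' (fun p => I.lptW k p / I.s p) hp).trans (le_max_left _ _)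

def eraseLast (h : 2 ≤ I.n) : SchedInstance where
  m := I.m
  n := I.n - 1
  s := I.s
  t := I.t
  hm := I.hm
  hn := by omega
  hs := I.hs
  ht i h1 h2 := I.ht i h1 (by omega)
  tsorted i j h1 h2 h3 := I.tsorted i j h1 h2 (by omega)

variable {I}

lemma eraseLast_lptW (h : 2 ≤ I.n) {k : ℕ} (hk : k ≤ I.n - 1) :
    (I.eraseLast h).lptW k = I.lptW k := by
  induction k with
  | zero => rfl
  | succ k ih =>
    funext p
    rw [lptW_succ, I.lptW_succ, ih (by omega)]
    have hkn : k + 1 ≤ I.n - 1 ↔ k + 1 ≤ I.n := by omega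
    simp only [eraseLast, hkn]
    rfl

lemma eraseLast_lptTime (h : 2 ≤ I.n) :
    (I.eraseLast h).lptTime = I.lptMakespan (I.n - 1) := by
  rw [lptTime_eq_lptMakespan, lptMakespan]
  show I.procs.sup' _ (fun p => (I.eraseLast h).lptW (I.n - 1) p / I.s p) = _
  rw [eraseLast_lptW h le_rfl]
  rfl

lemma eraseLast_opt_le (h : 2 ≤ I.n) : (I.eraseLast h).opt ≤ I.opt := by
  refine I.le_opt fun A hA => ?_
  have hA' : (I.eraseLast h).IsSchedule A := fun i hi =>
    hA i (Finset.Icc_subset_Icc_right (Nat.sub_le _ _) hi)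
  refine ((I.eraseLast h).opt_le_makespan hA').trans (Finset.sup'_le _ _ fun p hp => ?_)
  refine le_trans ?_ (Finset.le_sup' (fun p => I.load A p / I.s p) hp)
  refine div_le_div_of_nonneg_right ?_ (I.s_pos_of_mem hp).le
  exact Finset.sum_le_sum_of_subset_of_nonneg
    (Finset.filter_subset_filter _ (Finset.Icc_subset_Icc_right (Nat.sub_le _ _)))
    fun i hi _ => (I.t_pos_of_mem (Finset.mem_of_mem_filter i hi)).le

lemma lptMakespan_pred_lt_lptTime (hmin : I.Minimal) (h : 2 ≤ I.n) :
    I.lptMakespan (I.n - 1) < I.lptTime := by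
  have hlt : (I.eraseLast h).ratio < I.ratio :=
    hmin _ le_rfl (Nat.sub_le _ _) fun hmn => by have := hmn.2; simp [eraseLast] at this; omega
  have hle : (I.eraseLast h).lptTime / I.opt ≤ (I.eraseLast h).ratio :=
    div_le_div_of_nonneg_left ((I.eraseLast h).makespan_nonneg _) (I.eraseLast h).opt_pos
      (eraseLast_opt_le h)
  rw [← eraseLast_lptTime h]
  exact (div_lt_div_iff_of_pos_right I.opt_pos).mp (hle.trans_lt hlt)

lemma lptTime_le_cost_last (hmin : I.Minimal) :
    I.lptTime ≤ I.cost (I.lptW (I.n - 1)) I.n (I.lptA I.n) := by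
  have hstep := I.lptMakespan_succ_le (I.n - 1)
  rw [Nat.sub_add_cancel I.hn, ← lptTime_eq_lptMakespan] at hstep
  rcases Nat.lt_or_ge I.n 2 with hn1 | hn2
  · have hn1 : I.n - 1 = 0 := by omega
    rw [hn1, lptMakespan_zero] at hstep
    have hcost : 0 ≤ I.cost (I.lptW 0) I.n (I.choose (I.lptW 0) I.n) := by
      unfold cost
      refine div_nonneg ?_ (I.s_pos_of_mem (hn1 ▸ I.lptA_mem I.n)).le
      simp only [lptW, zero_add]
      exact (I.t_pos_of_mem (Finset.mem_Icc.mpr ⟨I.hn, le_rfl⟩)).le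
    rw [lptA, hn1]
    exact hstep.trans (max_le hcost le_rfl)
  · exact (le_max_iff.mp hstep).resolve_left (lptMakespan_pred_lt_lptTime hmin hn2).not_ge

lemma lptTime_mul_s_le (hmin : I.Minimal) {p : ℕ} (hp : p ∈ I.procs) :
    I.lptTime * I.s p ≤ I.lptW (I.n - 1) p + I.t I.n := by
  rw [← le_div_iff₀ (I.s_pos_of_mem hp)]
  exact (lptTime_le_cost_last hmin).trans (I.cost_choose_le _ _ hp)

end SchedInstance

/-- If `I = (m, n, s, t)` is a minimal normalized instance with `ρ_I > 1`, then
`n ≤ Σ_i t(i) ≤ (m − 1)/(ρ_I − 1)`. -/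
theorem sum_t_le (I : SchedInstance)
    (hnorm : I.Normalized) (hmin : I.Minimal) (hρ : 1 < I.ratio) :
    (I.n : ℝ) ≤ ∑ i ∈ Finset.Icc 1 I.n, I.t i ∧
    ∑ i ∈ Finset.Icc 1 I.n, I.t i ≤ ((I.m : ℝ) - 1) / (I.ratio - 1) := by
  obtain ⟨hopt, -, htn⟩ := hnorm
  have ht1 : ∀ i ∈ Finset.Icc 1 I.n, 1 ≤ I.t i := fun i hi =>
    htn ▸ I.tsorted i I.n (Finset.mem_Icc.mp hi).1 (Finset.mem_Icc.mp hi).2 le_rfl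
  refine ⟨by simpa using Finset.card_nsmul_le_sum _ _ _ ht1, ?_⟩
  have hratio : I.ratio = I.lptTime := by rw [SchedInstance.ratio, hopt, div_one]
  have hpred : ∑ i ∈ Finset.Icc 1 (I.n - 1), I.t i = ∑ i ∈ Finset.Icc 1 I.n, I.t i - 1 := by
    have h := Finset.sum_Icc_succ_top (show 1 ≤ I.n - 1 + 1 by omega) I.t
    rw [Nat.sub_add_cancel I.hn, htn] at h
    rw [h, add_sub_cancel_right]
  have hlpt : I.ratio * ∑ p ∈ I.procs, I.s p ≤ ∑ i ∈ Finset.Icc 1 I.n, I.t i - 1 + I.m := by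
    have h := Finset.sum_le_sum fun p hp => SchedInstance.lptTime_mul_s_le hmin (p := p) hp
    rwa [← Finset.mul_sum, ← hratio, Finset.sum_add_distrib, I.sum_lptW_of_le (Nat.sub_le _ _),
      hpred, htn, Finset.sum_const, nsmul_one, I.card_procs] at h
  have hopt_sum : ∑ i ∈ Finset.Icc 1 I.n, I.t i ≤ ∑ p ∈ I.procs, I.s p := by
    have h := I.sum_t_le_opt_mul_sum_s
    rwa [hopt, one_mul] at h
  have hmono := mul_le_mul_of_nonneg_left hopt_sum (zero_le_one.trans hρ.le)
  rw [le_div_iff₀ (sub_pos.mpr hρ)]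
  linarith
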